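/- Let u, w, y_i, y_j be continuous real functions on [z₀, z₁] with u continuously differentiable, and suppose -(u y_i')' + v y_i = λ_i w y_i and -(u y_j')' + v y_j = λ_j w y_j on [z₀, z₁], with λ_i ≠ λ_j, and both y_i, y_j satisfy the boundary conditions a₀y(z₀) - a₁u(z₀)y'(z₀) = 0 and b₀y(z₁) + b₁u(z₁)y'(z₁) = 0 with (a₀, a₁) ≠ (0,0) and (b₀, b₁) ≠ (0,0). Then ∫_{z₀}^{z₁} w(z)·y_i(z)·y_j(z) dz = 0. -/

import Mathlib

/-!
Lagrange's identity: for solutions of `-(u y')' + v y = λ w y` the bracket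
`u (yᵢ yⱼ' - yᵢ' yⱼ)` has derivative `(λᵢ - λⱼ) w yᵢ yⱼ`, so the weighted integral is
`(λᵢ - λⱼ)⁻¹` times the difference of the bracket at the endpoints. A separated boundary
condition puts the Cauchy data `(y, u y')` of both eigenfunctions on one line, so their
determinant, which is the bracket, vanishes at each endpoint.
-/

open Set

theorem mul_sub_mul_eq_zero_of_mul_add_mul_eq_zero {R : Type*} [CommRing R] [NoZeroDivisors R]
    {a b x₁ y₁ x₂ y₂ : R} (hab : (a, b) ≠ (0, 0))
    (h₁ : a * x₁ + b * y₁ = 0) (h₂ : a * x₂ + b * y₂ = 0) :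
    x₁ * y₂ - x₂ * y₁ = 0 := by
  by_contra hD
  have haD : a * (x₁ * y₂ - x₂ * y₁) = 0 := by linear_combination y₂ * h₁ - y₁ * h₂
  have hbD : b * (x₁ * y₂ - x₂ * y₁) = 0 := by linear_combination x₁ * h₂ - x₂ * h₁
  exact hab (Prod.ext ((mul_eq_zero.mp haD).resolve_right hD)
    ((mul_eq_zero.mp hbD).resolve_right hD))

noncomputable def lagrangeBracket (u f g : ℝ → ℝ) (t : ℝ) : ℝ :=
  f t * (u t * deriv g t) - g t * (u t * deriv f t)

section LagrangeBracket

variable {u f g : ℝ → ℝ}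

theorem hasDerivAt_lagrangeBracket {z : ℝ} (hf : DifferentiableAt ℝ f z)
    (hg : DifferentiableAt ℝ g z) (huf : DifferentiableAt ℝ (fun t => u t * deriv f t) z)
    (hug : DifferentiableAt ℝ (fun t => u t * deriv g t) z) :
    HasDerivAt (lagrangeBracket u f g)
      (f z * deriv (fun t => u t * deriv g t) z - g z * deriv (fun t => u t * deriv f t) z) z := by
  have h := (hf.hasDerivAt.fun_mul hug.hasDerivAt).fun_sub (hg.hasDerivAt.fun_mul huf.hasDerivAt)
  exact h.congr_deriv (by ring)

theorem contDiff_mul_deriv (hu : ContDiff ℝ 1 u) (hf : ContDiff ℝ 2 f) :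
    ContDiff ℝ 1 (fun t => u t * deriv f t) :=
  hu.mul hf.deriv'

theorem contDiff_lagrangeBracket (hu : ContDiff ℝ 1 u) (hf : ContDiff ℝ 2 f)
    (hg : ContDiff ℝ 2 g) : ContDiff ℝ 1 (lagrangeBracket u f g) :=
  ((hf.of_le one_le_two).mul (contDiff_mul_deriv hu hg)).sub
    ((hg.of_le one_le_two).mul (contDiff_mul_deriv hu hf))

theorem lagrangeBracket_eq_zero_of_boundary {z a b : ℝ} (hab : (a, b) ≠ (0, 0))
    (hf : a * f z + b * (u z * deriv f z) = 0) (hg : a * g z + b * (u z * deriv g z) = 0) :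
    lagrangeBracket u f g z = 0 :=
  mul_sub_mul_eq_zero_of_mul_add_mul_eq_zero hab hf hg

end LagrangeBracket

theorem stmt_15_general (z₀ z₁ : ℝ) (hz : z₀ < z₁)
    (u v w yi yj : ℝ → ℝ) (lami lamj a₀ a₁ b₀ b₁ : ℝ)
    (hu : ContDiff ℝ 1 u)
    (hyi : ContDiff ℝ 2 yi) (hyj : ContDiff ℝ 2 yj)
    (hodei : ∀ z ∈ Set.Icc z₀ z₁,
      -(deriv (fun t => u t * deriv yi t) z) + v z * yi z = lami * w z * yi z)
    (hodej : ∀ z ∈ Set.Icc z₀ z₁,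
      -(deriv (fun t => u t * deriv yj t) z) + v z * yj z = lamj * w z * yj z)
    (hlam : lami ≠ lamj)
    (ha : (a₀, a₁) ≠ (0, 0)) (hbb : (b₀, b₁) ≠ (0, 0))
    (hbci : a₀ * yi z₀ - a₁ * u z₀ * deriv yi z₀ = 0)
    (hbci' : b₀ * yi z₁ + b₁ * u z₁ * deriv yi z₁ = 0)
    (hbcj : a₀ * yj z₀ - a₁ * u z₀ * deriv yj z₀ = 0)
    (hbcj' : b₀ * yj z₁ + b₁ * u z₁ * deriv yj z₁ = 0) :
    ∫ z in z₀..z₁, w z * yi z * yj z = 0 := by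
  have hderiv : EqOn (deriv (lagrangeBracket u yi yj))
      (fun z => (lami - lamj) * (w z * yi z * yj z)) (uIcc z₀ z₁) := by
    intro z hzI
    rw [uIcc_of_le hz.le] at hzI
    rw [(hasDerivAt_lagrangeBracket (hyi.differentiable two_ne_zero z)
      (hyj.differentiable two_ne_zero z) ((contDiff_mul_deriv hu hyi).differentiable one_ne_zero z)
      ((contDiff_mul_deriv hu hyj).differentiable one_ne_zero z)).deriv]
    linear_combination yj z * hodei z hzI - yi z * hodej z hzI
  have hleft : lagrangeBracket u yi yj z₀ = 0 :=
    lagrangeBracket_eq_zero_of_boundary (a := a₀) (b := -a₁) (by simpa [Prod.ext_iff] using ha)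
      (by linear_combination hbci) (by linear_combination hbcj)
  have hright : lagrangeBracket u yi yj z₁ = 0 :=
    lagrangeBracket_eq_zero_of_boundary hbb (by linear_combination hbci')
      (by linear_combination hbcj')
  have hftc := intervalIntegral.integral_deriv_of_contDiffOn_Icc
    (contDiff_lagrangeBracket hu hyi hyj).contDiffOn hz.le
  rw [intervalIntegral.integral_congr hderiv, intervalIntegral.integral_const_mul, hleft, hright,
    sub_zero] at hftc
  exact (mul_eq_zero.mp hftc).resolve_left (sub_ne_zero.mpr hlam)

theorem stmt_15 (z₀ z₁ : ℝ) (hz : z₀ < z₁)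
    (u v w yi yj : ℝ → ℝ) (lami lamj a₀ a₁ b₀ b₁ : ℝ)
    (hu : ContDiff ℝ 1 u)
    (hw : ContinuousOn w (Set.Icc z₀ z₁))
    (hyi : ContDiff ℝ 2 yi) (hyj : ContDiff ℝ 2 yj)
    (hodei : ∀ z ∈ Set.Icc z₀ z₁,
      -(deriv (fun t => u t * deriv yi t) z) + v z * yi z = lami * w z * yi z)
    (hodej : ∀ z ∈ Set.Icc z₀ z₁,
      -(deriv (fun t => u t * deriv yj t) z) + v z * yj z = lamj * w z * yj z)
    (hlam : lami ≠ lamj)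
    (ha : (a₀, a₁) ≠ (0, 0)) (hbb : (b₀, b₁) ≠ (0, 0))
    (hbci : a₀ * yi z₀ - a₁ * u z₀ * deriv yi z₀ = 0)
    (hbci' : b₀ * yi z₁ + b₁ * u z₁ * deriv yi z₁ = 0)
    (hbcj : a₀ * yj z₀ - a₁ * u z₀ * deriv yj z₀ = 0)
    (hbcj' : b₀ * yj z₁ + b₁ * u z₁ * deriv yj z₁ = 0) :
    ∫ z in z₀..z₁, w z * yi z * yj z = 0 :=
  stmt_15_general z₀ z₁ hz u v w yi yj lami lamj a₀ a₁ b₀ b₁ hu hyi hyj hodei hodej hlam ha hbb hbci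
    hbci' hbcj hbcj'
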